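/- arXiv:2010.14758 — 5 statements merged into one kernel-verified Lean document; each statement's English description precedes it below -/
import Mathlib

section
/- Let ε ∈ (0,1) and let (x,y) ∈ [0,1]² be an (f,g)-fixed point for ε. Then: (i) if x = 0 then y = 0; and (ii) if in addition either P0 = 0 or λ2(0) > 0, then y = 0 implies x = 0. -/
/-!
Part (i) and the case `P0 = 0` are direct substitutions, using `ρ1(1) = ρ2(1) = 1` and
`Λ1(0) = λ1(0) = 0`. When `λ2(0) > 0`, `y = 0` forces `Λ1(u) = 0` at
`u = 1 - ρ1(1 - x) ≥ 0`; a nonzero polynomial with nonnegative coefficients has no positive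
root, so `u = 0`, and then `x = ε λ1(0) ⋯ = 0`.
-/

open Polynomial Set

namespace Polynomial

variable {p : ℝ[X]}

theorem eval_mono_of_coeff_nonneg (hp : ∀ i, 0 ≤ p.coeff i) {a b : ℝ} (ha : 0 ≤ a)
    (hab : a ≤ b) : p.eval a ≤ p.eval b := by
  simp only [eval_eq_sum_range]
  exact Finset.sum_le_sum fun i _ => mul_le_mul_of_nonneg_left (pow_le_pow_left₀ ha hab i) (hp i)

theorem eval_pos_of_coeff_nonneg (hp : ∀ i, 0 ≤ p.coeff i) (hp0 : p ≠ 0) {u : ℝ} (hu : 0 < u) :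
    0 < p.eval u := by
  rw [eval_eq_sum]
  refine Finset.sum_pos (fun i hi => mul_pos ?_ (pow_pos hu i)) (support_nonempty.2 hp0)
  exact (hp i).lt_of_ne' (mem_support_iff.1 hi)

theorem eq_zero_of_eval_eq_zero_of_coeff_nonneg (hp : ∀ i, 0 ≤ p.coeff i) (hp0 : p ≠ 0)
    {u : ℝ} (hu : 0 ≤ u) (h : p.eval u = 0) : u = 0 :=
  (hu.eq_or_lt.resolve_right fun hu' => (eval_pos_of_coeff_nonneg hp hp0 hu').ne' h).symm

end Polynomial

theorem stmt_1_general
    (L1 R1 L2 R2 B1 B2 : Polynomial ℝ)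
    (hR1c : ∀ i, 0 ≤ R1.coeff i)
    (hB1c : ∀ i, 0 ≤ B1.coeff i)
    (hR1one : R1.eval 1 = 1)
    (hR2one : R2.eval 1 = 1)
    (hB1one : B1.eval 1 = 1)
    (hL1zero : L1.eval 0 = 0) (hB10 : B1.coeff 0 = 0)
    (f g : ℝ → ℝ → ℝ → ℝ)
    (hf : ∀ ε x y, f ε x y = ε * L1.eval (1 - R1.eval (1 - x)) * B2.eval (1 - R2.eval (1 - y)))
    (hg : ∀ ε x y, g ε x y = ε * B1.eval (1 - R1.eval (1 - x)) * L2.eval (1 - R2.eval (1 - y)))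
    (ε x y : ℝ) (hε : ε ∈ Ioo (0:ℝ) 1)
    (hx : x ∈ Icc (0:ℝ) 1)
    (hfix : x = f ε x y ∧ y = g ε x y) :
    (x = 0 → y = 0) ∧ ((B2.eval 0 = 0 ∨ 0 < L2.eval 0) → y = 0 → x = 0) := by
  obtain ⟨hxf, hyg⟩ := hfix
  rw [hf] at hxf
  rw [hg] at hyg
  have hB1zero : B1.eval 0 = 0 := by rwa [← coeff_zero_eq_eval_zero]
  refine ⟨fun hx0 => by simpa [hx0, hR1one, hB1zero] using hyg, ?_⟩
  rintro (hP0 | hL2pos) hy0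
  · simpa [hy0, hR2one, hP0] using hxf
  have hu_nonneg : 0 ≤ 1 - R1.eval (1 - x) := sub_nonneg.2 <|
    hR1one ▸ eval_mono_of_coeff_nonneg hR1c (by linarith [hx.2]) (by linarith [hx.1])
  have hB1u : B1.eval (1 - R1.eval (1 - x)) = 0 := by
    simpa [hy0, hR2one, hε.1.ne', hL2pos.ne'] using hyg.symm
  have hu : 1 - R1.eval (1 - x) = 0 :=
    eq_zero_of_eval_eq_zero_of_coeff_nonneg hB1c (by rintro rfl; simp at hB1one) hu_nonneg hB1u
  simpa [hu, hL1zero] using hxf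

/-- Lemma 2, item 1: for an `(f,g)`-fixed point, `x = 0` implies `y = 0`; and if
`P0 = 0` or `λ2(0) > 0`, then `y = 0` implies `x = 0`. -/
theorem stmt_1
    (L1 R1 L2 R2 B1 B2 : Polynomial ℝ)
    (hL1c : ∀ i, 0 ≤ L1.coeff i) (hR1c : ∀ i, 0 ≤ R1.coeff i)
    (hL2c : ∀ i, 0 ≤ L2.coeff i) (hR2c : ∀ i, 0 ≤ R2.coeff i)
    (hB1c : ∀ i, 0 ≤ B1.coeff i) (hB2c : ∀ i, 0 ≤ B2.coeff i)
    (hL1one : L1.eval 1 = 1) (hR1one : R1.eval 1 = 1)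
    (hL2one : L2.eval 1 = 1) (hR2one : R2.eval 1 = 1)
    (hB1one : B1.eval 1 = 1) (hB2one : B2.eval 1 = 1)
    (hL1zero : L1.eval 0 = 0) (hB10 : B1.coeff 0 = 0) (hB11 : B1.coeff 1 = 0)
    (hR1nc : ¬ (∀ u : ℝ, R1.eval u = 1))
    (f g : ℝ → ℝ → ℝ → ℝ)
    (hf : ∀ ε x y, f ε x y = ε * L1.eval (1 - R1.eval (1 - x)) * B2.eval (1 - R2.eval (1 - y)))
    (hg : ∀ ε x y, g ε x y = ε * B1.eval (1 - R1.eval (1 - x)) * L2.eval (1 - R2.eval (1 - y)))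
    (ε x y : ℝ) (hε : ε ∈ Ioo (0:ℝ) 1)
    (hx : x ∈ Icc (0:ℝ) 1) (hy : y ∈ Icc (0:ℝ) 1)
    (hfix : x = f ε x y ∧ y = g ε x y) :
    (x = 0 → y = 0) ∧ ((B2.eval 0 = 0 ∨ 0 < L2.eval 0) → y = 0 → x = 0) :=
  stmt_1_general L1 R1 L2 R2 B1 B2 hR1c hB1c hR1one hR2one hB1one hL1zero hB10 f g hf hg ε x y hε hx
    hfix
end

section
/- Let ε ∈ (0,1) and let (x,y) ∈ [0,1]² be an (f,g)-fixed point for ε. Then (x,y) ∈ [0,ε)², i.e., x < ε and y < ε. -/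
open Polynomial Set

/-!
A polynomial `P` with nonnegative coefficients and `P 1 = 1` maps `[0,1]` into `[0,1]`, and
`P t ≤ t` there when `P 0 = 0`. Hence `u = 1 - ρ₁(1 - x)` and `v = 1 - ρ₂(1 - y)` lie in
`[0,1]`, and the fixed-point equations give `x ≤ ε < 1`. Then `ρ₁(1 - x) ≥ (1 - x)^deg ρ₁ > 0`,
so `u < 1`, and since `λ₁` and `Λ₁` vanish at `0`, both `λ₁(u)` and `Λ₁(u)` are `< 1`, which
gives `x, y < ε`.
-/

namespace Polynomial

variable {P : ℝ[X]}

theorem eval_le_eval_of_coeff_nonneg (hP : ∀ i, 0 ≤ P.coeff i) {s t : ℝ} (hs : 0 ≤ s)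
    (hst : s ≤ t) : P.eval s ≤ P.eval t := by
  rw [eval_eq_sum_range, eval_eq_sum_range]
  gcongr with i
  exact hP i

theorem eval_mem_Icc_of_coeff_nonneg (hP : ∀ i, 0 ≤ P.coeff i) (hP1 : P.eval 1 = 1) {t : ℝ}
    (ht : t ∈ Icc 0 1) : P.eval t ∈ Icc 0 1 := by
  have h0 := eval_le_eval_of_coeff_nonneg hP le_rfl ht.1
  rw [← coeff_zero_eq_eval_zero] at h0
  exact ⟨(hP 0).trans h0, hP1 ▸ eval_le_eval_of_coeff_nonneg hP ht.1 ht.2⟩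

theorem eval_le_mul_eval_one_of_coeff_zero (hP : ∀ i, 0 ≤ P.coeff i) (hP0 : P.coeff 0 = 0)
    {t : ℝ} (ht : t ∈ Icc 0 1) : P.eval t ≤ t * P.eval 1 := by
  rw [eval_eq_sum_range, eval_eq_sum_range, Finset.mul_sum]
  refine Finset.sum_le_sum fun i _ => ?_
  rcases Nat.eq_zero_or_pos i with rfl | hi
  · simp [hP0]
  · rw [one_pow, mul_one, mul_comm t]
    exact mul_le_mul_of_nonneg_left (pow_le_of_le_one ht.1 ht.2 hi.ne') (hP i)

theorem eval_mem_Ico_of_coeff_zero (hP : ∀ i, 0 ≤ P.coeff i) (hP1 : P.eval 1 = 1)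
    (hP0 : P.coeff 0 = 0) {t : ℝ} (ht : t ∈ Ico 0 1) : P.eval t ∈ Ico 0 1 :=
  ⟨(eval_mem_Icc_of_coeff_nonneg hP hP1 (Ico_subset_Icc_self ht)).1,
    (eval_le_mul_eval_one_of_coeff_zero hP hP0 (Ico_subset_Icc_self ht)).trans_lt
      (by rw [hP1, mul_one]; exact ht.2)⟩

theorem pow_natDegree_mul_eval_one_le_eval (hP : ∀ i, 0 ≤ P.coeff i) {t : ℝ}
    (ht : t ∈ Icc 0 1) : t ^ P.natDegree * P.eval 1 ≤ P.eval t := by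
  rw [eval_eq_sum_range, eval_eq_sum_range, Finset.mul_sum]
  refine Finset.sum_le_sum fun i hi => ?_
  rw [one_pow, mul_one, mul_comm]
  exact mul_le_mul_of_nonneg_left
    (pow_le_pow_of_le_one ht.1 ht.2 (Nat.lt_succ_iff.mp (Finset.mem_range.mp hi))) (hP i)

theorem one_sub_eval_one_sub_mem_Icc (hP : ∀ i, 0 ≤ P.coeff i) (hP1 : P.eval 1 = 1) {t : ℝ}
    (ht : t ∈ Icc 0 1) : 1 - P.eval (1 - t) ∈ Icc 0 1 := by
  have h := eval_mem_Icc_of_coeff_nonneg hP hP1 (t := 1 - t)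
    ⟨by linarith [ht.2], by linarith [ht.1]⟩
  exact ⟨by linarith [h.2], by linarith [h.1]⟩

theorem one_sub_eval_one_sub_lt_one (hP : ∀ i, 0 ≤ P.coeff i) (hP1 : P.eval 1 = 1) {t : ℝ}
    (ht : t ∈ Ico 0 1) : 1 - P.eval (1 - t) < 1 := by
  have h := pow_natDegree_mul_eval_one_le_eval hP (t := 1 - t)
    ⟨by linarith [ht.2], by linarith [ht.1]⟩
  have hpos : 0 < (1 - t) ^ P.natDegree := pow_pos (by linarith [ht.2]) _
  rw [hP1, mul_one] at h
  linarith

end Polynomial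

theorem mul_mul_le_self {ε a b : ℝ} (hε : 0 ≤ ε) (ha : a ∈ Icc 0 1) (hb : b ∈ Icc 0 1) :
    ε * a * b ≤ ε := by
  rw [mul_assoc]
  exact mul_le_of_le_one_right hε (mul_le_one₀ ha.2 hb.1 hb.2)

theorem mul_mul_lt_self {ε a b : ℝ} (hε : 0 < ε) (ha : a ∈ Ico 0 1) (hb : b ∈ Icc 0 1) :
    ε * a * b < ε := by
  rw [mul_assoc]
  exact mul_lt_of_lt_one_right hε ((mul_le_of_le_one_right ha.1 hb.2).trans_lt ha.2)

theorem stmt_2_general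
    (L1 R1 L2 R2 B1 B2 : Polynomial ℝ)
    (hL1c : ∀ i, 0 ≤ L1.coeff i) (hR1c : ∀ i, 0 ≤ R1.coeff i)
    (hL2c : ∀ i, 0 ≤ L2.coeff i) (hR2c : ∀ i, 0 ≤ R2.coeff i)
    (hB1c : ∀ i, 0 ≤ B1.coeff i) (hB2c : ∀ i, 0 ≤ B2.coeff i)
    (hL1one : L1.eval 1 = 1) (hR1one : R1.eval 1 = 1)
    (hL2one : L2.eval 1 = 1) (hR2one : R2.eval 1 = 1)
    (hB1one : B1.eval 1 = 1) (hB2one : B2.eval 1 = 1)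
    (hL1zero : L1.eval 0 = 0) (hB10 : B1.coeff 0 = 0)
    (f g : ℝ → ℝ → ℝ → ℝ)
    (hf : ∀ ε x y, f ε x y = ε * L1.eval (1 - R1.eval (1 - x)) * B2.eval (1 - R2.eval (1 - y)))
    (hg : ∀ ε x y, g ε x y = ε * B1.eval (1 - R1.eval (1 - x)) * L2.eval (1 - R2.eval (1 - y)))
    (ε x y : ℝ) (hε : ε ∈ Ioo (0:ℝ) 1)
    (hx : x ∈ Icc (0:ℝ) 1) (hy : y ∈ Icc (0:ℝ) 1)
    (hfix : x = f ε x y ∧ y = g ε x y) :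
    x ∈ Ico (0:ℝ) ε ∧ y ∈ Ico (0:ℝ) ε := by
  obtain ⟨hxf, hyg⟩ := hfix
  rw [hf] at hxf
  rw [hg] at hyg
  have hu := one_sub_eval_one_sub_mem_Icc hR1c hR1one hx
  have hv := one_sub_eval_one_sub_mem_Icc hR2c hR2one hy
  have hB2v := eval_mem_Icc_of_coeff_nonneg hB2c hB2one hv
  have hL2v := eval_mem_Icc_of_coeff_nonneg hL2c hL2one hv
  have hL1u := eval_mem_Icc_of_coeff_nonneg hL1c hL1one hu
  have hx1 : x < 1 := (hxf.trans_le (mul_mul_le_self hε.1.le hL1u hB2v)).trans_lt hε.2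
  have hu1 := one_sub_eval_one_sub_lt_one hR1c hR1one ⟨hx.1, hx1⟩
  have hL1u_lt := eval_mem_Ico_of_coeff_zero hL1c hL1one (coeff_zero_eq_eval_zero L1 ▸ hL1zero)
    ⟨hu.1, hu1⟩
  have hB1u := eval_mem_Ico_of_coeff_zero hB1c hB1one hB10 ⟨hu.1, hu1⟩
  exact ⟨⟨hx.1, hxf.trans_lt (mul_mul_lt_self hε.1 hL1u_lt hB2v)⟩,
    ⟨hy.1, hyg.trans_lt (mul_mul_lt_self hε.1 hB1u hL2v)⟩⟩

/-- Lemma 2, item 2: every `(f,g)`-fixed point lies in `[0, ε)²`. -/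
theorem stmt_2
    (L1 R1 L2 R2 B1 B2 : Polynomial ℝ)
    (hL1c : ∀ i, 0 ≤ L1.coeff i) (hR1c : ∀ i, 0 ≤ R1.coeff i)
    (hL2c : ∀ i, 0 ≤ L2.coeff i) (hR2c : ∀ i, 0 ≤ R2.coeff i)
    (hB1c : ∀ i, 0 ≤ B1.coeff i) (hB2c : ∀ i, 0 ≤ B2.coeff i)
    (hL1one : L1.eval 1 = 1) (hR1one : R1.eval 1 = 1)
    (hL2one : L2.eval 1 = 1) (hR2one : R2.eval 1 = 1)
    (hB1one : B1.eval 1 = 1) (hB2one : B2.eval 1 = 1)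
    (hL1zero : L1.eval 0 = 0) (hB10 : B1.coeff 0 = 0) (hB11 : B1.coeff 1 = 0)
    (f g : ℝ → ℝ → ℝ → ℝ)
    (hf : ∀ ε x y, f ε x y = ε * L1.eval (1 - R1.eval (1 - x)) * B2.eval (1 - R2.eval (1 - y)))
    (hg : ∀ ε x y, g ε x y = ε * B1.eval (1 - R1.eval (1 - x)) * L2.eval (1 - R2.eval (1 - y)))
    (ε x y : ℝ) (hε : ε ∈ Ioo (0:ℝ) 1)
    (hx : x ∈ Icc (0:ℝ) 1) (hy : y ∈ Icc (0:ℝ) 1)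
    (hfix : x = f ε x y ∧ y = g ε x y) :
    x ∈ Ico (0:ℝ) ε ∧ y ∈ Ico (0:ℝ) ε :=
  stmt_2_general L1 R1 L2 R2 B1 B2 hL1c hR1c hL2c hR2c hB1c hB2c hL1one hR1one hL2one hR2one hB1one
    hB2one hL1zero hB10 f g hf hg ε x y hε hx hy hfix
end

section
/- Let (x_l(ε))_{l≥0}, (y_l(ε))_{l≥0} be the density-evolution sequences and let 0 < ε ≤ ε' < 1. Then for all l ≥ 0: x_{l+1}(ε) ≤ x_l(ε) and y_{l+1}(ε) ≤ y_l(ε) (monotonicity in the iteration number), and x_l(ε) ≤ x_l(ε') and y_l(ε) ≤ y_l(ε') (monotonicity in the channel parameter). -/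
/-!
Each coordinate update `x ↦ λ(1 - ρ(1 - x))` composes two polynomials with nonnegative
coefficients, which are monotone on `[0, ∞)`, with two reflections `t ↦ 1 - t`; it is therefore
monotone on `[0, 1]` and maps `[0, 1]` into itself. Hence the density-evolution map
`T_ε(x, y) = (f(ε, x, y), g(ε, x, y))` is monotone on the unit square, maps it into itself and
increases with `ε`. Started at the top corner `(1, 1)`, the first step goes down, and monotonicity
of `T_ε` propagates this to every step; comparing `T_ε ≤ T_ε'` step by step gives monotonicity
in the channel parameter.
-/

open Polynomial Set unitInterval

namespace Polynomial

variable {R : Type*} [Semiring R] [PartialOrder R] [IsOrderedRing R] {p : R[X]}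

lemma eval_nonneg_of_coeff_nonneg (hp : ∀ i, 0 ≤ p.coeff i) {x : R} (hx : 0 ≤ x) :
    0 ≤ p.eval x := by
  rw [eval_eq_sum_range]
  exact Finset.sum_nonneg fun i _ => mul_nonneg (hp i) (pow_nonneg hx i)

lemma monotoneOn_eval_of_coeff_nonneg (hp : ∀ i, 0 ≤ p.coeff i) :
    MonotoneOn p.eval (Ici 0) := by
  intro x hx y _ hxy
  dsimp only
  rw [eval_eq_sum_range, eval_eq_sum_range]
  exact Finset.sum_le_sum fun i _ =>
    mul_le_mul_of_nonneg_left (pow_le_pow_left₀ hx hxy i) (hp i)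

lemma mapsTo_eval_Icc_of_coeff_nonneg (hp : ∀ i, 0 ≤ p.coeff i) (hp1 : p.eval 1 = 1) :
    MapsTo p.eval (Icc 0 1) (Icc 0 1) := fun _ hx =>
  ⟨eval_nonneg_of_coeff_nonneg hp hx.1,
    hp1 ▸ monotoneOn_eval_of_coeff_nonneg hp hx.1 zero_le_one hx.2⟩

end Polynomial

def erasureMap (L R : ℝ[X]) (x : ℝ) : ℝ := L.eval (1 - R.eval (1 - x))

section ErasureMap

variable {L R : ℝ[X]}

lemma one_sub_eval_one_sub_mem (hR : ∀ i, 0 ≤ R.coeff i) (hR1 : R.eval 1 = 1) {x : ℝ}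
    (hx : x ∈ I) : 1 - R.eval (1 - x) ∈ I :=
  Icc.one_sub_mem (mapsTo_eval_Icc_of_coeff_nonneg hR hR1 (Icc.one_sub_mem hx))

lemma mapsTo_erasureMap (hL : ∀ i, 0 ≤ L.coeff i) (hR : ∀ i, 0 ≤ R.coeff i)
    (hL1 : L.eval 1 = 1) (hR1 : R.eval 1 = 1) : MapsTo (erasureMap L R) I I := fun _ hx =>
  mapsTo_eval_Icc_of_coeff_nonneg hL hL1 (one_sub_eval_one_sub_mem hR hR1 hx)

lemma monotoneOn_erasureMap (hL : ∀ i, 0 ≤ L.coeff i) (hR : ∀ i, 0 ≤ R.coeff i)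
    (hR1 : R.eval 1 = 1) : MonotoneOn (erasureMap L R) I := by
  intro x hx y hy hxy
  have hRyx : R.eval (1 - y) ≤ R.eval (1 - x) :=
    monotoneOn_eval_of_coeff_nonneg hR (Icc.one_sub_mem hy).1 (Icc.one_sub_mem hx).1
      (sub_le_sub_left hxy 1)
  exact monotoneOn_eval_of_coeff_nonneg hL (one_sub_eval_one_sub_mem hR hR1 hx).1
    (one_sub_eval_one_sub_mem hR hR1 hy).1 (sub_le_sub_left hRyx 1)

end ErasureMap

def scaledProductMap (φ₁ ψ₁ φ₂ ψ₂ : ℝ → ℝ) (e : ℝ) (z : ℝ × ℝ) : ℝ × ℝ :=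
  (e * φ₁ z.1 * ψ₁ z.2, e * φ₂ z.1 * ψ₂ z.2)

section ScaledProduct

variable {φ ψ φ₁ ψ₁ φ₂ ψ₂ : ℝ → ℝ}

lemma mul_mul_mem_unitInterval (hφ : MapsTo φ I I) (hψ : MapsTo ψ I I) {e : ℝ} {z : ℝ × ℝ}
    (he : e ∈ I) (hz : z ∈ I ×ˢ I) : e * φ z.1 * ψ z.2 ∈ I :=
  unitInterval.mul_mem (unitInterval.mul_mem he (hφ hz.1)) (hψ hz.2)

lemma mul_mul_le_mul_mul_of_monotoneOn (hφ : MonotoneOn φ I ∧ MapsTo φ I I)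
    (hψ : MonotoneOn ψ I ∧ MapsTo ψ I I) {e e' : ℝ} {z z' : ℝ × ℝ} (he : 0 ≤ e) (hee' : e ≤ e')
    (hz : z ∈ I ×ˢ I) (hz' : z' ∈ I ×ˢ I) (hzz' : z ≤ z') :
    e * φ z.1 * ψ z.2 ≤ e' * φ z'.1 * ψ z'.2 := by
  have he' := he.trans hee'
  exact mul_le_mul (mul_le_mul hee' (hφ.1 hz.1 hz'.1 hzz'.1) (hφ.2 hz.1).1 he')
    (hψ.1 hz.2 hz'.2 hzz'.2) (hψ.2 hz.2).1 (mul_nonneg he' (hφ.2 hz'.1).1)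

lemma mapsTo_scaledProductMap (hφ₁ : MapsTo φ₁ I I) (hψ₁ : MapsTo ψ₁ I I)
    (hφ₂ : MapsTo φ₂ I I) (hψ₂ : MapsTo ψ₂ I I) {e : ℝ} (he : e ∈ I) :
    MapsTo (scaledProductMap φ₁ ψ₁ φ₂ ψ₂ e) (I ×ˢ I) (I ×ˢ I) := fun _ hz =>
  ⟨mul_mul_mem_unitInterval hφ₁ hψ₁ he hz, mul_mul_mem_unitInterval hφ₂ hψ₂ he hz⟩

lemma scaledProductMap_le_scaledProductMap (hφ₁ : MonotoneOn φ₁ I ∧ MapsTo φ₁ I I)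
    (hψ₁ : MonotoneOn ψ₁ I ∧ MapsTo ψ₁ I I) (hφ₂ : MonotoneOn φ₂ I ∧ MapsTo φ₂ I I)
    (hψ₂ : MonotoneOn ψ₂ I ∧ MapsTo ψ₂ I I) {e e' : ℝ} {z z' : ℝ × ℝ} (he : 0 ≤ e)
    (hee' : e ≤ e') (hz : z ∈ I ×ˢ I) (hz' : z' ∈ I ×ˢ I) (hzz' : z ≤ z') :
    scaledProductMap φ₁ ψ₁ φ₂ ψ₂ e z ≤ scaledProductMap φ₁ ψ₁ φ₂ ψ₂ e' z' :=
  ⟨mul_mul_le_mul_mul_of_monotoneOn hφ₁ hψ₁ he hee' hz hz' hzz', mul_mul_le_mul_mul_of_monotoneOn hφ₂ hψ₂ he hee' hz hz' hzz'⟩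

lemma monotoneOn_scaledProductMap (hφ₁ : MonotoneOn φ₁ I ∧ MapsTo φ₁ I I)
    (hψ₁ : MonotoneOn ψ₁ I ∧ MapsTo ψ₁ I I) (hφ₂ : MonotoneOn φ₂ I ∧ MapsTo φ₂ I I)
    (hψ₂ : MonotoneOn ψ₂ I ∧ MapsTo ψ₂ I I) {e : ℝ} (he : 0 ≤ e) :
    MonotoneOn (scaledProductMap φ₁ ψ₁ φ₂ ψ₂ e) (I ×ˢ I) := fun _ hz _ hz' hzz' =>
  scaledProductMap_le_scaledProductMap hφ₁ hψ₁ hφ₂ hψ₂ he le_rfl hz hz' hzz'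

end ScaledProduct

section Orbits

variable {α : Type*} {S : Set α} {T T' : α → α} {u v : ℕ → α}

lemma mem_of_succ_eq_of_mapsTo (hS : MapsTo T S S) (hu : ∀ n, u (n + 1) = T (u n))
    (h0 : u 0 ∈ S) (n : ℕ) : u n ∈ S := by
  induction n with
  | zero => exact h0
  | succ n ih => exact hu n ▸ hS ih

variable [Preorder α]

lemma antitone_of_succ_eq_of_isGreatest (hT : MonotoneOn T S) (hS : MapsTo T S S)
    (hu : ∀ n, u (n + 1) = T (u n)) (h0 : IsGreatest S (u 0)) : Antitone u := by
  have hmem := mem_of_succ_eq_of_mapsTo hS hu h0.1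
  refine antitone_nat_of_succ_le fun n => ?_
  induction n with
  | zero => exact h0.2 (hmem 1)
  | succ n ih =>
    rw [hu (n + 1)]
    nth_rw 2 [hu n]
    exact hT (hmem _) (hmem _) ih

lemma le_of_succ_eq_of_le (hT' : MonotoneOn T' S) (hS : MapsTo T S S) (hS' : MapsTo T' S S)
    (hTT' : ∀ z ∈ S, T z ≤ T' z) (hu : ∀ n, u (n + 1) = T (u n))
    (hv : ∀ n, v (n + 1) = T' (v n)) (h0 : u 0 = v 0) (hS0 : u 0 ∈ S) (n : ℕ) : u n ≤ v n := by
  induction n with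
  | zero => exact h0.le
  | succ n ih =>
    have hu_mem := mem_of_succ_eq_of_mapsTo hS hu hS0 n
    have hv_mem := mem_of_succ_eq_of_mapsTo hS' hv (h0 ▸ hS0) n
    rw [hu, hv]
    exact (hTT' _ hu_mem).trans (hT' hu_mem hv_mem ih)

end Orbits

lemma isGreatest_unitSquare_one : IsGreatest (I ×ˢ I) ((1, 1) : ℝ × ℝ) := by
  rw [Icc_prod_Icc]
  exact isGreatest_Icc (Prod.mk_le_mk.2 ⟨zero_le_one, zero_le_one⟩)

theorem stmt_4_general
    (L1 R1 L2 R2 B1 B2 : Polynomial ℝ)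
    (hL1c : ∀ i, 0 ≤ L1.coeff i) (hR1c : ∀ i, 0 ≤ R1.coeff i)
    (hL2c : ∀ i, 0 ≤ L2.coeff i) (hR2c : ∀ i, 0 ≤ R2.coeff i)
    (hB1c : ∀ i, 0 ≤ B1.coeff i) (hB2c : ∀ i, 0 ≤ B2.coeff i)
    (hL1one : L1.eval 1 = 1) (hR1one : R1.eval 1 = 1)
    (hL2one : L2.eval 1 = 1) (hR2one : R2.eval 1 = 1)
    (hB1one : B1.eval 1 = 1) (hB2one : B2.eval 1 = 1)
    (f g : ℝ → ℝ → ℝ → ℝ)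
    (hf : ∀ ε x y, f ε x y = ε * L1.eval (1 - R1.eval (1 - x)) * B2.eval (1 - R2.eval (1 - y)))
    (hg : ∀ ε x y, g ε x y = ε * B1.eval (1 - R1.eval (1 - x)) * L2.eval (1 - R2.eval (1 - y)))
    (xs ys : ℝ → ℕ → ℝ)
    (hxs0 : ∀ e, xs e 0 = 1) (hys0 : ∀ e, ys e 0 = 1)
    (hxsrec : ∀ e l, xs e (l + 1) = f e (xs e l) (ys e l))
    (hysrec : ∀ e l, ys e (l + 1) = g e (xs e l) (ys e l))
    (ε ε' : ℝ) (hε : 0 < ε) (hεε' : ε ≤ ε') (hε' : ε' < 1) :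
    ∀ l, (xs ε (l + 1) ≤ xs ε l ∧ ys ε (l + 1) ≤ ys ε l) ∧
      (xs ε l ≤ xs ε' l ∧ ys ε l ≤ ys ε' l) := by
  have hE {L R : ℝ[X]} (hL : ∀ i, 0 ≤ L.coeff i) (hR : ∀ i, 0 ≤ R.coeff i) (hL1 : L.eval 1 = 1)
      (hR1 : R.eval 1 = 1) : MonotoneOn (erasureMap L R) I ∧ MapsTo (erasureMap L R) I I :=
    ⟨monotoneOn_erasureMap hL hR hR1, mapsTo_erasureMap hL hR hL1 hR1⟩
  have hφ₁ := hE hL1c hR1c hL1one hR1one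
  have hψ₁ := hE hB2c hR2c hB2one hR2one
  have hφ₂ := hE hB1c hR1c hB1one hR1one
  have hψ₂ := hE hL2c hR2c hL2one hR2one
  have hεI : ε ∈ I := ⟨hε.le, hεε'.trans hε'.le⟩
  have hε'I : ε' ∈ I := ⟨hε.le.trans hεε', hε'.le⟩
  set T := scaledProductMap (erasureMap L1 R1) (erasureMap B2 R2) (erasureMap B1 R1)
    (erasureMap L2 R2)
  let u (e : ℝ) (n : ℕ) : ℝ × ℝ := (xs e n, ys e n)
  have hu (e : ℝ) (n : ℕ) : u e (n + 1) = T e (u e n) := by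
    simp only [u, T, scaledProductMap, erasureMap, hxsrec, hysrec, hf, hg]
  have hu0 (e : ℝ) : u e 0 = (1, 1) := by simp only [u, hxs0, hys0]
  have h_anti := antitone_of_succ_eq_of_isGreatest
    (monotoneOn_scaledProductMap hφ₁ hψ₁ hφ₂ hψ₂ hεI.1)
    (mapsTo_scaledProductMap hφ₁.2 hψ₁.2 hφ₂.2 hψ₂.2 hεI) (hu ε)
    (hu0 ε ▸ isGreatest_unitSquare_one)
  have h_le := le_of_succ_eq_of_le (monotoneOn_scaledProductMap hφ₁ hψ₁ hφ₂ hψ₂ hε'I.1)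
    (mapsTo_scaledProductMap hφ₁.2 hψ₁.2 hφ₂.2 hψ₂.2 hεI)
    (mapsTo_scaledProductMap hφ₁.2 hψ₁.2 hφ₂.2 hψ₂.2 hε'I)
    (fun _ hz => scaledProductMap_le_scaledProductMap hφ₁ hψ₁ hφ₂ hψ₂ hεI.1 hεε' hz hz le_rfl)
    (hu ε) (hu ε') ((hu0 ε).trans (hu0 ε').symm) (hu0 ε ▸ isGreatest_unitSquare_one.1)
  exact fun l => ⟨Prod.mk_le_mk.1 (h_anti l.le_succ), Prod.mk_le_mk.1 (h_le l)⟩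

/-- Lemma 3: the density-evolution sequences are non-increasing in the iteration number
and non-decreasing in the channel parameter. -/
theorem stmt_4
    (L1 R1 L2 R2 B1 B2 : Polynomial ℝ)
    (hL1c : ∀ i, 0 ≤ L1.coeff i) (hR1c : ∀ i, 0 ≤ R1.coeff i)
    (hL2c : ∀ i, 0 ≤ L2.coeff i) (hR2c : ∀ i, 0 ≤ R2.coeff i)
    (hB1c : ∀ i, 0 ≤ B1.coeff i) (hB2c : ∀ i, 0 ≤ B2.coeff i)
    (hL1one : L1.eval 1 = 1) (hR1one : R1.eval 1 = 1)
    (hL2one : L2.eval 1 = 1) (hR2one : R2.eval 1 = 1)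
    (hB1one : B1.eval 1 = 1) (hB2one : B2.eval 1 = 1)
    (hL1zero : L1.eval 0 = 0) (hB10 : B1.coeff 0 = 0) (hB11 : B1.coeff 1 = 0)
    (f g : ℝ → ℝ → ℝ → ℝ)
    (hf : ∀ ε x y, f ε x y = ε * L1.eval (1 - R1.eval (1 - x)) * B2.eval (1 - R2.eval (1 - y)))
    (hg : ∀ ε x y, g ε x y = ε * B1.eval (1 - R1.eval (1 - x)) * L2.eval (1 - R2.eval (1 - y)))
    (xs ys : ℝ → ℕ → ℝ)
    (hxs0 : ∀ e, xs e 0 = 1) (hys0 : ∀ e, ys e 0 = 1)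
    (hxsrec : ∀ e l, xs e (l + 1) = f e (xs e l) (ys e l))
    (hysrec : ∀ e l, ys e (l + 1) = g e (xs e l) (ys e l))
    (ε ε' : ℝ) (hε : 0 < ε) (hεε' : ε ≤ ε') (hε' : ε' < 1) :
    ∀ l, (xs ε (l + 1) ≤ xs ε l ∧ ys ε (l + 1) ≤ ys ε l) ∧
      (xs ε l ≤ xs ε' l ∧ ys ε l ≤ ys ε' l) :=
  stmt_4_general L1 R1 L2 R2 B1 B2 hL1c hR1c hL2c hR2c hB1c hB2c hL1one hR1one hL2one hR2one hB1one
    hB2one f g hf hg xs ys hxs0 hys0 hxsrec hysrec ε ε' hε hεε' hε'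
end

section
/- The decoding threshold equals the largest channel parameter below which no non-trivial fixed point exists: ε2* = sup{ ε ∈ [0,1] : there is no (f,g)-fixed point (x,y) for ε with x ∈ (0,1] and y ∈ [0,1] }. -/
/-!
Write `T_ε (x, y) = (f ε x y, g ε x y)`. For `ε ∈ [0,1]` this map sends the box `[0,1]²` into
itself and is monotone there for the coordinatewise order, because polynomials with nonnegative
coefficients are monotone on `[0, ∞)`. Hence the density-evolution iterates, which start at the top
corner `(1, 1)`, decrease to a limit; by continuity this limit is a fixed point, and by monotonicity
it dominates every fixed point in the box. So `x_l(ε) → 0` exactly when no fixed point in the box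
has positive first coordinate, and the two sets whose suprema are compared coincide.
-/

open Polynomial Set Filter Function Topology

def MonotoneSelfMapOn {α : Type*} [Preorder α] (T : α → α) (s : Set α) : Prop :=
  MonotoneOn T s ∧ MapsTo T s s

namespace MonotoneSelfMapOn

variable {α : Type*} [Preorder α] {T T' : α → α} {s : Set α}

theorem comp (hT : MonotoneSelfMapOn T s) (hT' : MonotoneSelfMapOn T' s) :
    MonotoneSelfMapOn (T ∘ T') s :=
  ⟨hT.1.comp hT'.1 hT'.2, hT.2.comp hT'.2⟩

theorem le_iterate_of_isFixedPt (hT : MonotoneSelfMapOn T s) {p q : α} (hp : p ∈ s)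
    (hq : q ∈ s) (hfix : IsFixedPt T p) (hpq : p ≤ q) (n : ℕ) : p ≤ T^[n] q := by
  induction n with
  | zero => exact hpq
  | succ n ih =>
    calc p = T p := hfix.symm
      _ ≤ T (T^[n] q) := hT.1 hp (hT.2.iterate n hq) ih
      _ = T^[n + 1] q := (iterate_succ_apply' T n q).symm

theorem antitone_iterate_of_map_le (hT : MonotoneSelfMapOn T s) {q : α} (hq : q ∈ s)
    (hTq : T q ≤ q) : Antitone fun n => T^[n] q := by
  refine antitone_nat_of_succ_le fun n => ?_
  induction n with
  | zero => simpa using hTq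
  | succ n ih =>
    calc T^[n + 1 + 1] q = T (T^[n + 1] q) := iterate_succ_apply' T _ q
      _ ≤ T (T^[n] q) := hT.1 (hT.2.iterate _ hq) (hT.2.iterate _ hq) ih
      _ = T^[n + 1] q := (iterate_succ_apply' T n q).symm

end MonotoneSelfMapOn

theorem ContinuousOn.isFixedPt_of_tendsto_iterate {X : Type*} [TopologicalSpace X] [T2Space X]
    {T : X → X} {s : Set X} (hT : ContinuousOn T s) (hs : MapsTo T s s) {p q : X}
    (hq : q ∈ s) (hp : p ∈ s) (h : Tendsto (fun n => T^[n] q) atTop (𝓝 p)) : IsFixedPt T p := by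
  have hwithin : Tendsto (fun n => T^[n] q) atTop (𝓝[s] p) :=
    tendsto_nhdsWithin_iff.2 ⟨h, Eventually.of_forall fun n => hs.iterate n hq⟩
  have hsucc : Tendsto (fun n => T^[n + 1] q) atTop (𝓝 p) := (tendsto_add_atTop_iff_nat 1).2 h
  simp only [iterate_succ_apply'] at hsucc
  exact tendsto_nhds_unique ((hT p hp).tendsto.comp hwithin) hsucc

theorem exists_tendsto_of_antitone_of_mem_Icc {u : ℕ → ℝ × ℝ} {a b : ℝ × ℝ} (hu : Antitone u)
    (hmem : ∀ n, u n ∈ Icc a b) : ∃ p ∈ Icc a b, Tendsto u atTop (𝓝 p) := by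
  have h₁ : Tendsto (fun n => (u n).1) atTop (𝓝 (⨅ n, (u n).1)) :=
    tendsto_atTop_ciInf (monotone_fst.comp_antitone hu)
      ⟨a.1, by rintro _ ⟨n, rfl⟩; exact (hmem n).1.1⟩
  have h₂ : Tendsto (fun n => (u n).2) atTop (𝓝 (⨅ n, (u n).2)) :=
    tendsto_atTop_ciInf (monotone_snd.comp_antitone hu)
      ⟨a.2, by rintro _ ⟨n, rfl⟩; exact (hmem n).1.2⟩
  have h := h₁.prodMk_nhds h₂
  exact ⟨_, isClosed_Icc.mem_of_tendsto h (Eventually.of_forall hmem), h⟩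

section Box

variable {T : ℝ × ℝ → ℝ × ℝ} {a b : ℝ × ℝ}

theorem exists_isGreatest_fixedPoints_tendsto_iterate (hab : a ≤ b)
    (hT : MonotoneSelfMapOn T (Icc a b)) (hcont : ContinuousOn T (Icc a b)) :
    ∃ p, IsGreatest (fixedPoints T ∩ Icc a b) p ∧ Tendsto (fun n => T^[n] b) atTop (𝓝 p) := by
  have hb : b ∈ Icc a b := right_mem_Icc.2 hab
  obtain ⟨p, hp, hlim⟩ := exists_tendsto_of_antitone_of_mem_Icc
    (hT.antitone_iterate_of_map_le hb (hT.2 hb).2) fun n => hT.2.iterate n hb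
  refine ⟨p, ⟨⟨hcont.isFixedPt_of_tendsto_iterate hT.2 hb hp hlim, hp⟩, ?_⟩, hlim⟩
  rintro r ⟨hfix, hr⟩
  exact ge_of_tendsto' hlim fun n => hT.le_iterate_of_isFixedPt hr hb hfix hr.2 n

theorem tendsto_fst_iterate_iff_not_exists_isFixedPt (hab : a ≤ b)
    (hT : MonotoneSelfMapOn T (Icc a b)) (hcont : ContinuousOn T (Icc a b)) :
    Tendsto (fun n => (T^[n] b).1) atTop (𝓝 a.1) ↔
      ¬∃ p ∈ Icc a b, a.1 < p.1 ∧ IsFixedPt T p := by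
  obtain ⟨p, ⟨⟨hfix, hp⟩, hgreatest⟩, hlim⟩ :=
    exists_isGreatest_fixedPoints_tendsto_iterate hab hT hcont
  have hlim₁ : Tendsto (fun n => (T^[n] b).1) atTop (𝓝 p.1) := (continuous_fst.tendsto p).comp hlim
  constructor
  · rintro h ⟨r, hr, har, hrfix⟩
    have hpa : p.1 = a.1 := tendsto_nhds_unique hlim₁ h
    have hrp : r.1 ≤ p.1 := (hgreatest ⟨hrfix, hr⟩).1
    linarith
  · intro h
    have hpa : p.1 = a.1 := le_antisymm (not_lt.1 fun hlt => h ⟨p, hp, hlt, hfix⟩) hp.1.1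
    rwa [← hpa]

end Box

section UnitInterval

variable {ε : ℝ} {φ ψ φ₁ ψ₁ φ₂ ψ₂ : ℝ → ℝ}

theorem MonotoneSelfMapOn.one_sub_comp_one_sub (hφ : MonotoneSelfMapOn φ (Icc 0 1)) :
    MonotoneSelfMapOn (fun x => 1 - φ (1 - x)) (Icc 0 1) := by
  have hmem {x : ℝ} (hx : x ∈ Icc (0 : ℝ) 1) : 1 - x ∈ Icc (0 : ℝ) 1 :=
    ⟨sub_nonneg.2 hx.2, by linarith [hx.1]⟩
  exact ⟨fun x hx y hy hxy => sub_le_sub_left (hφ.1 (hmem hy) (hmem hx) (by linarith)) 1,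
    fun x hx => hmem (hφ.2 (hmem hx))⟩

theorem monotoneOn_const_mul_mul_Icc (hε : 0 ≤ ε) (hφ : MonotoneSelfMapOn φ (Icc 0 1))
    (hψ : MonotoneSelfMapOn ψ (Icc 0 1)) :
    MonotoneOn (fun z : ℝ × ℝ => ε * φ z.1 * ψ z.2) (Icc 0 1) := by
  intro z ⟨hz₀, hz₁⟩ w ⟨hw₀, hw₁⟩ hzw
  have hz₁' : z.1 ∈ Icc 0 1 := ⟨hz₀.1, hz₁.1⟩
  have hz₂' : z.2 ∈ Icc 0 1 := ⟨hz₀.2, hz₁.2⟩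
  have hw₁' : w.1 ∈ Icc 0 1 := ⟨hw₀.1, hw₁.1⟩
  have hw₂' : w.2 ∈ Icc 0 1 := ⟨hw₀.2, hw₁.2⟩
  exact mul_le_mul (mul_le_mul_of_nonneg_left (hφ.1 hz₁' hw₁' hzw.1) hε)
    (hψ.1 hz₂' hw₂' hzw.2) (hψ.2 hz₂').1 (mul_nonneg hε (hφ.2 hw₁').1)

theorem mapsTo_const_mul_mul_Icc (hε : ε ∈ Icc 0 1) (hφ : MapsTo φ (Icc 0 1) (Icc 0 1))
    (hψ : MapsTo ψ (Icc 0 1) (Icc 0 1)) :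
    MapsTo (fun z : ℝ × ℝ => ε * φ z.1 * ψ z.2) (Icc 0 1) (Icc 0 1) := by
  intro z ⟨hz₀, hz₁⟩
  obtain ⟨hφ₀, hφ₁⟩ := hφ ⟨hz₀.1, hz₁.1⟩
  obtain ⟨hψ₀, hψ₁⟩ := hψ ⟨hz₀.2, hz₁.2⟩
  exact ⟨mul_nonneg (mul_nonneg hε.1 hφ₀) hψ₀, mul_le_one₀ (mul_le_one₀ hε.2 hφ₀ hφ₁) hψ₀ hψ₁⟩

theorem monotoneSelfMapOn_Icc_const_mul_mul (hε : ε ∈ Icc 0 1)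
    (hφ₁ : MonotoneSelfMapOn φ₁ (Icc 0 1)) (hψ₁ : MonotoneSelfMapOn ψ₁ (Icc 0 1))
    (hφ₂ : MonotoneSelfMapOn φ₂ (Icc 0 1)) (hψ₂ : MonotoneSelfMapOn ψ₂ (Icc 0 1)) :
    MonotoneSelfMapOn (fun z : ℝ × ℝ => (ε * φ₁ z.1 * ψ₂ z.2, ε * ψ₁ z.1 * φ₂ z.2))
      (Icc 0 1) := by
  have hmono₁ := monotoneOn_const_mul_mul_Icc hε.1 hφ₁ hψ₂
  have hmono₂ := monotoneOn_const_mul_mul_Icc hε.1 hψ₁ hφ₂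
  have hmaps₁ := mapsTo_const_mul_mul_Icc hε hφ₁.2 hψ₂.2
  have hmaps₂ := mapsTo_const_mul_mul_Icc hε hψ₁.2 hφ₂.2
  exact ⟨fun z hz w hw hzw => ⟨hmono₁ hz hw hzw, hmono₂ hz hw hzw⟩,
    fun z hz => ⟨⟨(hmaps₁ hz).1, (hmaps₂ hz).1⟩, ⟨(hmaps₁ hz).2, (hmaps₂ hz).2⟩⟩⟩

end UnitInterval

namespace Polynomial

theorem monotoneOn_eval_of_coeff_nonneg_s5 {R : Type*} [Semiring R] [PartialOrder R]
    [IsOrderedRing R] {p : R[X]} (hp : ∀ i, 0 ≤ p.coeff i) :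
    MonotoneOn (fun x => p.eval x) (Ici 0) := by
  intro x hx y _ hxy
  simp only [eval_eq_sum_range]
  exact Finset.sum_le_sum fun i _ =>
    mul_le_mul_of_nonneg_left (pow_le_pow_left₀ hx hxy i) (hp i)

variable {p q : ℝ[X]}

theorem monotoneSelfMapOn_eval_Icc (hp : ∀ i, 0 ≤ p.coeff i) (hp₁ : p.eval 1 = 1) :
    MonotoneSelfMapOn (fun x => p.eval x) (Icc 0 1) := by
  have hmono := monotoneOn_eval_of_coeff_nonneg_s5 hp
  refine ⟨hmono.mono Icc_subset_Ici_self, fun x ⟨hx₀, hx₁⟩ => ⟨?_, ?_⟩⟩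
  · calc 0 ≤ p.eval 0 := coeff_zero_eq_eval_zero p ▸ hp 0
      _ ≤ p.eval x := hmono self_mem_Ici hx₀ hx₀
  · exact hp₁ ▸ hmono hx₀ (mem_Ici.2 zero_le_one) hx₁

theorem monotoneSelfMapOn_eval_one_sub_eval_one_sub (hp : ∀ i, 0 ≤ p.coeff i)
    (hp₁ : p.eval 1 = 1) (hq : ∀ i, 0 ≤ q.coeff i) (hq₁ : q.eval 1 = 1) :
    MonotoneSelfMapOn (fun x => p.eval (1 - q.eval (1 - x))) (Icc 0 1) :=
  (monotoneSelfMapOn_eval_Icc hp hp₁).comp (monotoneSelfMapOn_eval_Icc hq hq₁).one_sub_comp_one_sub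

end Polynomial

theorem stmt_5_general
    (L1 R1 L2 R2 B1 B2 : Polynomial ℝ)
    (hL1c : ∀ i, 0 ≤ L1.coeff i) (hR1c : ∀ i, 0 ≤ R1.coeff i)
    (hL2c : ∀ i, 0 ≤ L2.coeff i) (hR2c : ∀ i, 0 ≤ R2.coeff i)
    (hB1c : ∀ i, 0 ≤ B1.coeff i) (hB2c : ∀ i, 0 ≤ B2.coeff i)
    (hL1one : L1.eval 1 = 1) (hR1one : R1.eval 1 = 1)
    (hL2one : L2.eval 1 = 1) (hR2one : R2.eval 1 = 1)
    (hB1one : B1.eval 1 = 1) (hB2one : B2.eval 1 = 1)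
    (f g : ℝ → ℝ → ℝ → ℝ)
    (hf : ∀ ε x y, f ε x y = ε * L1.eval (1 - R1.eval (1 - x)) * B2.eval (1 - R2.eval (1 - y)))
    (hg : ∀ ε x y, g ε x y = ε * B1.eval (1 - R1.eval (1 - x)) * L2.eval (1 - R2.eval (1 - y)))
    (xs ys : ℝ → ℕ → ℝ)
    (hxs0 : ∀ e, xs e 0 = 1) (hys0 : ∀ e, ys e 0 = 1)
    (hxsrec : ∀ e l, xs e (l + 1) = f e (xs e l) (ys e l))
    (hysrec : ∀ e l, ys e (l + 1) = g e (xs e l) (ys e l)) :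
    sSup {e : ℝ | e ∈ Icc (0:ℝ) 1 ∧ Tendsto (fun l => xs e l) atTop (nhds 0)} =
      sSup {e : ℝ | e ∈ Icc (0:ℝ) 1 ∧
        ¬ ∃ x y : ℝ, x ∈ Ioc (0:ℝ) 1 ∧ y ∈ Icc (0:ℝ) 1 ∧ x = f e x y ∧ y = g e x y} := by
  let T (e : ℝ) (z : ℝ × ℝ) : ℝ × ℝ := (f e z.1 z.2, g e z.1 z.2)
  have hiter (e : ℝ) (n : ℕ) : (T e)^[n] 1 = (xs e n, ys e n) := by
    induction n with
    | zero => rw [iterate_zero_apply, hxs0, hys0]; rfl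
    | succ n ih => rw [iterate_succ_apply', ih, hxsrec, hysrec]
  have hcont (e : ℝ) : Continuous (T e) := by simp only [T, hf, hg]; fun_prop
  have hT (e : ℝ) (he : e ∈ Icc (0:ℝ) 1) : MonotoneSelfMapOn (T e) (Icc 0 1) := by
    simpa only [T, hf, hg] using monotoneSelfMapOn_Icc_const_mul_mul he
      (monotoneSelfMapOn_eval_one_sub_eval_one_sub hL1c hL1one hR1c hR1one)
      (monotoneSelfMapOn_eval_one_sub_eval_one_sub hB1c hB1one hR1c hR1one)
      (monotoneSelfMapOn_eval_one_sub_eval_one_sub hL2c hL2one hR2c hR2one)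
      (monotoneSelfMapOn_eval_one_sub_eval_one_sub hB2c hB2one hR2c hR2one)
  congr 1
  ext e
  refine and_congr_right fun he => ?_
  have key := tendsto_fst_iterate_iff_not_exists_isFixedPt zero_le_one (hT e he)
    (hcont e).continuousOn
  simp only [hiter, Prod.fst_zero] at key
  rw [key, not_iff_not]
  constructor
  · rintro ⟨⟨x, y⟩, ⟨⟨_, hy₀⟩, hx₁, hy₁⟩, hx₀, hfix⟩
    exact ⟨x, y, ⟨hx₀, hx₁⟩, ⟨hy₀, hy₁⟩, (congrArg Prod.fst hfix).symm,
      (congrArg Prod.snd hfix).symm⟩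
  · rintro ⟨x, y, ⟨hx₀, hx₁⟩, ⟨hy₀, hy₁⟩, hxf, hyg⟩
    exact ⟨(x, y), ⟨⟨hx₀.le, hy₀⟩, hx₁, hy₁⟩, hx₀, Prod.ext hxf.symm hyg.symm⟩

/-- Theorem 1: the decoding threshold equals the supremum of channel parameters for which
no non-trivial `(f,g)`-fixed point exists. -/
theorem stmt_5
    (L1 R1 L2 R2 B1 B2 : Polynomial ℝ)
    (hL1c : ∀ i, 0 ≤ L1.coeff i) (hR1c : ∀ i, 0 ≤ R1.coeff i)
    (hL2c : ∀ i, 0 ≤ L2.coeff i) (hR2c : ∀ i, 0 ≤ R2.coeff i)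
    (hB1c : ∀ i, 0 ≤ B1.coeff i) (hB2c : ∀ i, 0 ≤ B2.coeff i)
    (hL1one : L1.eval 1 = 1) (hR1one : R1.eval 1 = 1)
    (hL2one : L2.eval 1 = 1) (hR2one : R2.eval 1 = 1)
    (hB1one : B1.eval 1 = 1) (hB2one : B2.eval 1 = 1)
    (hL1zero : L1.eval 0 = 0) (hB10 : B1.coeff 0 = 0) (hB11 : B1.coeff 1 = 0)
    (f g : ℝ → ℝ → ℝ → ℝ)
    (hf : ∀ ε x y, f ε x y = ε * L1.eval (1 - R1.eval (1 - x)) * B2.eval (1 - R2.eval (1 - y)))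
    (hg : ∀ ε x y, g ε x y = ε * B1.eval (1 - R1.eval (1 - x)) * L2.eval (1 - R2.eval (1 - y)))
    (xs ys : ℝ → ℕ → ℝ)
    (hxs0 : ∀ e, xs e 0 = 1) (hys0 : ∀ e, ys e 0 = 1)
    (hxsrec : ∀ e l, xs e (l + 1) = f e (xs e l) (ys e l))
    (hysrec : ∀ e l, ys e (l + 1) = g e (xs e l) (ys e l)) :
    sSup {e : ℝ | e ∈ Icc (0:ℝ) 1 ∧ Tendsto (fun l => xs e l) atTop (nhds 0)} =
      sSup {e : ℝ | e ∈ Icc (0:ℝ) 1 ∧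
        ¬ ∃ x y : ℝ, x ∈ Ioc (0:ℝ) 1 ∧ y ∈ Icc (0:ℝ) 1 ∧ x = f e x y ∧ y = g e x y} :=
  stmt_5_general L1 R1 L2 R2 B1 B2 hL1c hR1c hL2c hR2c hB1c hB2c hL1one hR1one hL2one hR2one hB1one
    hB2one f g hf hg xs ys hxs0 hys0 hxsrec hysrec
end

section
/- Let L ≥ 1 and let 0 < ε_1 < ε_2 < ⋯ < ε_L < 1, let a_1, …, a_{L−1} ∈ [0,1], and let r_1, …, r_L be real numbers. Define θ_1 := ε_1 and θ_i := ε_i·a_{i−1} for 2 ≤ i ≤ L; define the layer gaps δ_i := r_i − θ_i; define P^{(1)} := 0 and P^{(i)} := ε_{i−1}/ε_i for 2 ≤ i ≤ L; and define the multi-layer gap δ := Σ_{i=1}^{L} r_i·(1 − P^{(i)}) − ε_L. Then δ ≤ Σ_{i=1}^{L} δ_i·(1 − P^{(i)}). -/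
open Finset

/-!
Split `r i = (r i - θ i) + θ i`; it remains to see `∑ θ i (1 - P i) ≤ ε_L`. The first layer
contributes `ε_1`, and layer `i ≥ 2` contributes `ε_i a_{i-1} (1 - ε_{i-1}/ε_i) = a_{i-1} (ε_i - ε_{i-1})`,
at most the increment `ε_i - ε_{i-1}`, so the sum telescopes to at most `ε_L`.
-/

lemma mul_mul_one_sub_div_le_sub {ε ε' a : ℝ} (hε' : ε' ≤ ε) (ha : a ≤ 1) :
    ε * a * (1 - ε' / ε) ≤ ε - ε' := by
  rcases eq_or_ne ε 0 with rfl | hε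
  · simpa using hε'
  · have hrewrite : ε * a * (1 - ε' / ε) = a * (ε - ε') := by
      field_simp
    rw [hrewrite]
    nlinarith

lemma sum_Icc_one_le_of_le_sub {g e : ℕ → ℝ} {n : ℕ} (hn : 1 ≤ n) (h1 : g 1 ≤ e 1)
    (hstep : ∀ i, 1 ≤ i → i < n → g (i + 1) ≤ e (i + 1) - e i) :
    ∑ i ∈ Icc 1 n, g i ≤ e n := by
  induction n, hn using Nat.le_induction with
  | base => simpa using h1
  | succ m hm ih =>
    rw [sum_Icc_succ_top (by omega)]
    have hprev := ih fun i hi him => hstep i hi (by omega)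
    linarith [hstep m hm (by omega)]

theorem stmt_13_general
    (L : ℕ) (hL : 1 ≤ L)
    (eps a r θ P : ℕ → ℝ)
    (hepsmono : ∀ i, 1 ≤ i → i < L → eps i < eps (i + 1))
    (ha : ∀ i, 1 ≤ i → i ≤ L - 1 → a i ∈ Set.Icc (0:ℝ) 1)
    (hθ1 : θ 1 = eps 1)
    (hθi : ∀ i, 2 ≤ i → i ≤ L → θ i = eps i * a (i - 1))
    (hP1 : P 1 = 0)
    (hPi : ∀ i, 2 ≤ i → i ≤ L → P i = eps (i - 1) / eps i)
    (δ : ℝ)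
    (hδ : δ = (∑ i ∈ Finset.Icc 1 L, r i * (1 - P i)) - eps L) :
    δ ≤ ∑ i ∈ Finset.Icc 1 L, (r i - θ i) * (1 - P i) := by
  have hθsum : ∑ i ∈ Icc 1 L, θ i * (1 - P i) ≤ eps L := by
    refine sum_Icc_one_le_of_le_sub hL (by simp [hθ1, hP1]) fun i hi hiL => ?_
    rw [hθi (i + 1) (by omega) hiL, hPi (i + 1) (by omega) hiL, Nat.add_sub_cancel]
    exact mul_mul_one_sub_div_le_sub (hepsmono i hi hiL).le (ha i hi (by omega)).2
  have hsplit : ∑ i ∈ Icc 1 L, r i * (1 - P i) =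
      ∑ i ∈ Icc 1 L, (r i - θ i) * (1 - P i) + ∑ i ∈ Icc 1 L, θ i * (1 - P i) := by
    rw [← sum_add_distrib]
    exact sum_congr rfl fun i _ => by ring
  rw [hδ, hsplit]
  linarith

/-- Lemma 6: the multi-layer gap to capacity is at most `Σ δ_i·(1 − P⁽ⁱ⁾)`. -/
theorem stmt_13
    (L : ℕ) (hL : 1 ≤ L)
    (eps a r θ P : ℕ → ℝ)
    (heps1 : 0 < eps 1)
    (hepsmono : ∀ i, 1 ≤ i → i < L → eps i < eps (i + 1))
    (hepsL : eps L < 1)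
    (ha : ∀ i, 1 ≤ i → i ≤ L - 1 → a i ∈ Set.Icc (0:ℝ) 1)
    (hθ1 : θ 1 = eps 1)
    (hθi : ∀ i, 2 ≤ i → i ≤ L → θ i = eps i * a (i - 1))
    (hP1 : P 1 = 0)
    (hPi : ∀ i, 2 ≤ i → i ≤ L → P i = eps (i - 1) / eps i)
    (δ : ℝ)
    (hδ : δ = (∑ i ∈ Finset.Icc 1 L, r i * (1 - P i)) - eps L) :
    δ ≤ ∑ i ∈ Finset.Icc 1 L, (r i - θ i) * (1 - P i) :=
  stmt_13_general L hL eps a r θ P hepsmono ha hθ1 hθi hP1 hPi δ hδ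
end
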